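/- For any multiple relation R, the collection K_R of subsets of J_R that are not splittable for R (a subset A ⊆ J_R is splittable for R if the restriction R|A is splittable along some bipartition of A) is an integral connectivity structure on J_R: the empty set and all singletons belong to K_R, and any subcollection of K_R with nonempty intersection has its union in K_R. -/

import Mathlib

open Classical

variable {I : Type*}

/-- A `J`-family: a choice of an element of `E j` for each `j ∈ J`. -/
abbrev Fam (E : I → Type*) (J : Set I) : Type _ := ∀ j : J, E j

/-- Restriction of a `J`-family to a subset `K ⊆ J`. -/
def restrictFam {E : I → Type*} {J K : Set I} (h : K ⊆ J) (x : Fam E J) : Fam E K :=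
  fun k => x ⟨k.1, h k.2⟩

/-- Transport of a family along an equality of index sets. -/
def castFam {E : I → Type*} {J K : Set I} (h : J = K) (x : Fam E J) : Fam E K :=
  h ▸ x

/-- Two families are compatible if they agree on the intersection of their domains. -/
def Compatible {E : I → Type*} {J K : Set I} (x : Fam E J) (y : Fam E K) : Prop :=
  ∀ (i : I) (hJ : i ∈ J) (hK : i ∈ K), x ⟨i, hJ⟩ = y ⟨i, hK⟩

/-- The sum (merge) of two families: the `J ∪ K`-family restricting to `x` on `J`
(and, when `x` and `y` are compatible, to `y` on `K`). -/
noncomputable def merge {E : I → Type*} {J K : Set I} (x : Fam E J) (y : Fam E K) :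
    Fam E (J ∪ K) :=
  fun i => if h : i.1 ∈ J then x ⟨i.1, h⟩ else y ⟨i.1, i.2.resolve_left h⟩

/-- A multiple relation: a domain `dom ⊆ I` together with a graph of `dom`-families. -/
structure MRel (E : I → Type*) where
  dom : Set I
  graph : Set (Fam E dom)

/-- The join of two multiple relations. -/
def MRel.join {E : I → Type*} (R S : MRel E) : MRel E where
  dom := R.dom ∪ S.dom
  graph := {x | restrictFam Set.subset_union_left x ∈ R.graph ∧
    restrictFam Set.subset_union_right x ∈ S.graph}

/-- The restriction of a multiple relation to a subset `K` of its domain. -/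
def MRel.restr {E : I → Type*} (R : MRel E) (K : Set I) (h : K ⊆ R.dom) : MRel E :=
  ⟨K, restrictFam h '' R.graph⟩

/-- The full (trivial) relation on `J`. -/
def MRel.full (E : I → Type*) (J : Set I) : MRel E := ⟨J, Set.univ⟩

/-- Inclusion of multiple relations: equal domains and inclusion of graphs. -/
def MRel.le {E : I → Type*} (R S : MRel E) : Prop :=
  ∃ h : R.dom = S.dom, ∀ x ∈ R.graph, castFam h x ∈ S.graph

/-- `A` is splittable for `R`: `A ⊆ J_R` and the restriction `R|A` splits along
some bipartition `(K, L)` of `A`. -/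
def SplittableFor {E : I → Type*} (R : MRel E) (A : Set I) : Prop :=
  ∃ (K L : Set I) (hK : K ⊆ R.dom) (hL : L ⊆ R.dom) (hA : A ⊆ R.dom),
    K.Nonempty ∧ L.Nonempty ∧ Disjoint K L ∧ K ∪ L = A ∧
      R.restr A hA = (R.restr K hK).join (R.restr L hL)

/-- The connectivity structure of `R`: the subsets of `J_R` that are not splittable. -/
def connStruct {E : I → Type*} (R : MRel E) : Set (Set I) :=
  {A | A ⊆ R.dom ∧ ¬ SplittableFor R A}

/-! Splitting `R|(K ∪ L)` along a bipartition `(K, L)` amounts to a gluing property of `R`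
itself: any two members of the graph can be glued into a member agreeing with the first on `K` and
with the second on `L`. This property passes to subsets of `K` and `L`, so a set meeting both
parts of a split set is split as well. If `⋃₀ C` split along `(K, L)` while a point `a` lies in
every member of `C`, say `a ∈ K`, then the member of `C` containing a point of `L` would meet
both parts, hence split. -/

section Merge
variable {E : I → Type*} {J K : Set I}

theorem restrictFam_merge_left (x : Fam E J) (y : Fam E K) :
    restrictFam Set.subset_union_left (merge x y) = x :=
  funext fun j => dif_pos j.2

theorem restrictFam_merge_right {x : Fam E J} {y : Fam E K} (h : Compatible x y) :
    restrictFam Set.subset_union_right (merge x y) = y := by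
  funext k
  unfold restrictFam merge
  split_ifs with hk
  · exact h k hk k.2
  · rfl

theorem compatible_of_disjoint (hd : Disjoint J K) (x : Fam E J) (y : Fam E K) :
    Compatible x y :=
  fun _ hJ hK => absurd hK (Set.disjoint_left.mp hd hJ)

end Merge

namespace MRel
variable {E : I → Type*} (R : MRel E) {K L : Set I}

def GluesAlong (K L : Set I) : Prop :=
  ∀ y ∈ R.graph, ∀ z ∈ R.graph, ∃ w ∈ R.graph,
    (∀ j : R.dom, j.1 ∈ K → w j = y j) ∧ (∀ j : R.dom, j.1 ∈ L → w j = z j)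

variable {R}

theorem GluesAlong.symm (h : R.GluesAlong K L) : R.GluesAlong L K :=
  fun y hy z hz => let ⟨w, hw, hwz, hwy⟩ := h z hz y hy; ⟨w, hw, hwy, hwz⟩

theorem GluesAlong.mono {K' L' : Set I} (h : R.GluesAlong K L) (hK : K' ⊆ K) (hL : L' ⊆ L) :
    R.GluesAlong K' L' :=
  fun y hy z hz => let ⟨w, hw, hwy, hwz⟩ := h y hy z hz
    ⟨w, hw, fun j hj => hwy j (hK hj), fun j hj => hwz j (hL hj)⟩

theorem restr_union_eq_join_iff (hK : K ⊆ R.dom) (hL : L ⊆ R.dom) (hKL : K ∪ L ⊆ R.dom)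
    (hd : Disjoint K L) :
    R.restr (K ∪ L) hKL = (R.restr K hK).join (R.restr L hL) ↔ R.GluesAlong K L := by
  change (⟨K ∪ L, restrictFam hKL '' R.graph⟩ : MRel E) =
    ⟨K ∪ L, {x | restrictFam Set.subset_union_left x ∈ restrictFam hK '' R.graph ∧
      restrictFam Set.subset_union_right x ∈ restrictFam hL '' R.graph}⟩ ↔ _
  simp only [MRel.mk.injEq, heq_eq_eq, true_and]
  constructor
  · intro hgraph y hy z hz
    obtain ⟨w, hw, hwm⟩ : merge (restrictFam hK y) (restrictFam hL z) ∈
        restrictFam hKL '' R.graph := by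
      rw [hgraph]
      exact ⟨⟨y, hy, (restrictFam_merge_left _ _).symm⟩,
        ⟨z, hz, (restrictFam_merge_right (compatible_of_disjoint hd _ _)).symm⟩⟩
    refine ⟨w, hw, fun j hj => ?_, fun j hj => ?_⟩
    · exact (congrFun hwm ⟨j, Or.inl hj⟩).trans
        (congrFun (restrictFam_merge_left (restrictFam hK y) (restrictFam hL z)) ⟨j, hj⟩)
    · exact (congrFun hwm ⟨j, Or.inr hj⟩).trans
        (congrFun (restrictFam_merge_right (compatible_of_disjoint hd (restrictFam hK y)
          (restrictFam hL z))) ⟨j, hj⟩)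
  · intro hglue
    ext x
    constructor
    · rintro ⟨w, hw, rfl⟩
      exact ⟨⟨w, hw, rfl⟩, ⟨w, hw, rfl⟩⟩
    · rintro ⟨⟨y, hy, hyx⟩, ⟨z, hz, hzx⟩⟩
      obtain ⟨w, hw, hwy, hwz⟩ := hglue y hy z hz
      refine ⟨w, hw, funext fun j => ?_⟩
      rcases j with ⟨j, hj | hj⟩
      · exact (hwy _ hj).trans (congrFun hyx ⟨j, hj⟩)
      · exact (hwz _ hj).trans (congrFun hzx ⟨j, hj⟩)

end MRel

section Splittable
variable {E : I → Type*} {R : MRel E} {A : Set I}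

theorem splittableFor_iff : SplittableFor R A ↔ A ⊆ R.dom ∧ ∃ K L : Set I,
    K.Nonempty ∧ L.Nonempty ∧ Disjoint K L ∧ K ∪ L = A ∧ R.GluesAlong K L := by
  constructor
  · rintro ⟨K, L, hK, hL, hA, hKn, hLn, hd, rfl, hsplit⟩
    exact ⟨hA, K, L, hKn, hLn, hd, rfl, (R.restr_union_eq_join_iff hK hL hA hd).1 hsplit⟩
  · rintro ⟨hA, K, L, hKn, hLn, hd, rfl, hglue⟩
    have hK := Set.subset_union_left.trans hA
    have hL := Set.subset_union_right.trans hA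
    exact ⟨K, L, hK, hL, hA, hKn, hLn, hd, rfl, (R.restr_union_eq_join_iff hK hL hA hd).2 hglue⟩

theorem SplittableFor.nontrivial (h : SplittableFor R A) : A.Nontrivial := by
  obtain ⟨-, K, L, ⟨k, hk⟩, ⟨l, hl⟩, hd, rfl, -⟩ := splittableFor_iff.1 h
  exact ⟨k, Or.inl hk, l, Or.inr hl, fun hkl => Set.disjoint_left.mp hd hk (hkl ▸ hl)⟩

theorem splittableFor_of_gluesAlong {K L B : Set I} (hglue : R.GluesAlong K L)
    (hd : Disjoint K L) (hB : B ⊆ R.dom) (hBKL : B ⊆ K ∪ L) (hBK : (B ∩ K).Nonempty)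
    (hBL : (B ∩ L).Nonempty) : SplittableFor R B :=
  splittableFor_iff.2 ⟨hB, B ∩ K, B ∩ L, hBK, hBL,
    hd.mono Set.inter_subset_right Set.inter_subset_right,
    by rw [← Set.inter_union_distrib_left, Set.inter_eq_left.2 hBKL],
    hglue.mono Set.inter_subset_right Set.inter_subset_right⟩

theorem SplittableFor.exists_splittableFor_of_sUnion {C : Set (Set I)}
    (hC : ∀ B ∈ C, B ⊆ R.dom) {a : I} (ha : a ∈ ⋂₀ C) (h : SplittableFor R (⋃₀ C)) :
    ∃ B ∈ C, SplittableFor R B := by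
  obtain ⟨-, K, L, ⟨k, hk⟩, ⟨l, hl⟩, hd, hKL, hglue⟩ := splittableFor_iff.1 h
  have hsub : ∀ B ∈ C, B ⊆ K ∪ L := fun B hB => hKL ▸ Set.subset_sUnion_of_mem hB
  obtain ⟨B₀, hB₀, -⟩ : k ∈ ⋃₀ C := hKL ▸ Or.inl hk
  rcases hsub B₀ hB₀ (ha B₀ hB₀) with haK | haL
  · obtain ⟨B, hB, hlB⟩ : l ∈ ⋃₀ C := hKL ▸ Or.inr hl
    exact ⟨B, hB, splittableFor_of_gluesAlong hglue hd (hC B hB) (hsub B hB)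
      ⟨a, ha B hB, haK⟩ ⟨l, hlB, hl⟩⟩
  · obtain ⟨B, hB, hkB⟩ : k ∈ ⋃₀ C := hKL ▸ Or.inl hk
    exact ⟨B, hB, splittableFor_of_gluesAlong hglue.symm hd.symm (hC B hB)
      (Set.union_comm K L ▸ hsub B hB) ⟨a, ha B hB, haL⟩ ⟨k, hkB, hk⟩⟩

end Splittable

theorem stmt18 {E : I → Type*} (R : MRel E) :
    (∅ ∈ connStruct R) ∧ (∀ i ∈ R.dom, {i} ∈ connStruct R) ∧
      (∀ C ⊆ connStruct R, (⋂₀ C).Nonempty → ⋃₀ C ∈ connStruct R) := by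
  refine ⟨⟨Set.empty_subset _, fun h => Set.not_nontrivial_empty h.nontrivial⟩,
    fun i hi => ⟨Set.singleton_subset_iff.2 hi,
      fun h => Set.not_nontrivial_singleton h.nontrivial⟩,
    fun C hC ⟨a, ha⟩ => ⟨Set.sUnion_subset fun B hB => (hC hB).1, fun h => ?_⟩⟩
  obtain ⟨B, hB, hsplit⟩ := h.exists_splittableFor_of_sUnion (fun B hB => (hC hB).1) ha
  exact (hC hB).2 hsplit
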